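/- If at every iteration k the accepted step satisfies f(x^{k+1}) ≤ f_bar_k + eta_k - gamma * alpha_k^2 * f(x^k), where f_bar_k = max{f(x^k), ..., f(x^{max(0, k-M+1)})}, eta_k > 0, and sum of eta_k over all k is finite, then the sequence f(x^k) is bounded above by max{f(x^0), ..., f(x^{M-1})} plus the sum of all eta_k. -/

import Mathlib

/-! Each value `f(xᵏ⁺¹)` exceeds some earlier value `f(xʲ)`, `j ≤ k` (the one realising the
window maximum), by at most `ηₖ`, since the penalty `γ αₖ² f(xᵏ)` is nonnegative. By strong
induction every value is then at most `f(x⁰) + Σ_{i<k} ηᵢ`. -/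

open Finset

theorem le_add_sum_range_of_le_earlier_add {α : Type*} [AddCommMonoid α] [PartialOrder α]
    [IsOrderedAddMonoid α] {u e : ℕ → α} {B : α} (he : ∀ k, 0 ≤ e k) (h0 : u 0 ≤ B)
    (hstep : ∀ k, ∃ j ≤ k, u (k + 1) ≤ u j + e k) (k : ℕ) :
    u k ≤ B + ∑ i ∈ range k, e i := by
  induction k using Nat.strong_induction_on with
  | _ k ih =>
    match k with
    | 0 => simpa using h0
    | m + 1 =>
      obtain ⟨j, hjm, hj⟩ := hstep m
      have hsum_mono : ∑ i ∈ range j, e i ≤ ∑ i ∈ range m, e i :=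
        sum_le_sum_of_subset_of_nonneg (range_subset_range.mpr hjm) fun i _ _ => he i
      calc u (m + 1) ≤ u j + e m := hj
        _ ≤ B + ∑ i ∈ range j, e i + e m := by gcongr; exact ih j (by omega)
        _ ≤ B + ∑ i ∈ range m, e i + e m := by gcongr
        _ = B + ∑ i ∈ range (m + 1), e i := by rw [sum_range_succ, add_assoc]

/-- If every accepted step satisfies the nonmonotone sufficient-decrease condition
with summable tolerances `ηₖ`, then `f(xᵏ)` is bounded above by
`max{f(x⁰),…,f(x^{M-1})} + Σ ηₖ`. -/
theorem nonmonotone_decrease_bounded {n : ℕ} (f : (Fin n → ℝ) → ℝ)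
    (hfnn : ∀ z, 0 ≤ f z) (γ : ℝ) (hγ0 : 0 < γ)
    (M : ℕ) (hM : 0 < M) (η : ℕ → ℝ) (hη : ∀ k, 0 < η k) (hsum : Summable η)
    (x : ℕ → Fin n → ℝ) (α : ℕ → ℝ)
    (hdec : ∀ k, f (x (k + 1)) ≤
      (Finset.Icc (k + 1 - M) k).sup' ⟨k, by rw [Finset.mem_Icc]; omega⟩
        (fun j => f (x j)) + η k - γ * (α k) ^ 2 * f (x k)) :
    ∀ k, f (x k) ≤
      (Finset.range M).sup' (Finset.nonempty_range_iff.mpr (by omega))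
        (fun j => f (x j)) + ∑' k, η k := by
  have hstep : ∀ k, ∃ j ≤ k, f (x (k + 1)) ≤ f (x j) + η k := by
    intro k
    obtain ⟨j, hj, hmax⟩ := exists_mem_eq_sup' (s := Icc (k + 1 - M) k)
      ⟨k, by rw [mem_Icc]; omega⟩ fun j => f (x j)
    have hpenalty : 0 ≤ γ * α k ^ 2 * f (x k) := mul_nonneg (by positivity) (hfnn _)
    refine ⟨j, (mem_Icc.mp hj).2, ?_⟩
    have hdec_k := hdec k
    rw [hmax] at hdec_k
    linarith
  intro k
  calc f (x k) ≤ (range M).sup' (nonempty_range_iff.mpr (by omega)) (fun j => f (x j)) +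
        ∑ i ∈ range k, η i :=
      le_add_sum_range_of_le_earlier_add (u := fun j => f (x j)) (fun i => (hη i).le)
        (le_sup' (fun j => f (x j)) (mem_range.mpr hM)) hstep k
    _ ≤ _ := by gcongr; exact hsum.sum_le_tsum _ fun i _ => (hη i).le
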